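/- Let V be a vector space over ℂ and let G : V × V → ℂ be an alternating (antisymmetric) bilinear form. Let I_G ⊆ T(V) be the CCR ideal. Then the linear map ℂ × V → T(V)/I_G, (c, v) ↦ c·1 + [ι v], is injective; equivalently, I_G intersects the subspace ℂ·1 + ι(V) of T(V) only in 0. -/

import Mathlib

variable {V : Type*} [AddCommGroup V] [Module ℂ V]

/-- The CCR generators `ι v * ι w - ι w * ι v - G(v,w)·1`, `v, w ∈ V`. -/
def ccrSet (G : V →ₗ[ℂ] V →ₗ[ℂ] ℂ) : Set (TensorAlgebra ℂ V) :=
  {x | ∃ v w : V, x = TensorAlgebra.ι ℂ v * TensorAlgebra.ι ℂ w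
    - TensorAlgebra.ι ℂ w * TensorAlgebra.ι ℂ v
    - algebraMap ℂ (TensorAlgebra ℂ V) (G v w)}

/-- The defining relation of the CCR ideal `I_G = TwoSidedIdeal.span (ccrSet G)`;
`RingQuot` of this relation is the quotient `T(V)/I_G`. -/
def ccrRel (G : V →ₗ[ℂ] V →ₗ[ℂ] ℂ) :
    TensorAlgebra ℂ V → TensorAlgebra ℂ V → Prop :=
  fun a b => a - b ∈ ccrSet G

/-! The commutation relations are realised on the polynomial algebra `ℂ[V]` (in the
coordinates of a basis): `ρ(v)` is multiplication by `v` plus the derivation `D_v` with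
`D_v(w) = G(v,w)/2`. The derivations commute with each other, so
`[ρ v, ρ w] = D_v(w) - D_w(v) = G(v,w)` by antisymmetry, and `ρ` factors through `T(V)/I_G`.
Applied to the constant polynomial `1`, the class of `c·1 + ι v` becomes the polynomial
`c + v`, from which `c` and `v` can be read off. -/

open MvPolynomial

section FockRepresentation

variable {R M ι : Type*} [CommRing R] [AddCommGroup M] [Module R M]

theorem mulLeft_add_derivation_commutator {A : Type*} [CommRing A] [Algebra R A]
    (a c : A) (D E : Derivation R A A) (hDE : ⁅D, E⁆ = 0) :
    (LinearMap.mulLeft R a + (D : A →ₗ[R] A)) * (LinearMap.mulLeft R c + (E : A →ₗ[R] A))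
      - (LinearMap.mulLeft R c + (E : A →ₗ[R] A)) * (LinearMap.mulLeft R a + (D : A →ₗ[R] A))
      = LinearMap.mulLeft R (D c - E a) := by
  ext q
  have hcomm : D (E q) = E (D q) := sub_eq_zero.mp (by rw [← Derivation.commutator_apply, hDE]; rfl)
  simp only [LinearMap.sub_apply, Module.End.mul_apply, LinearMap.add_apply,
    LinearMap.mulLeft_apply, Derivation.coeFn_coe, map_add, Derivation.leibniz, smul_eq_mul,
    hcomm]
  ring

variable (b : Module.Basis ι R M)

noncomputable def Module.Basis.toMvPolynomial : M →ₗ[R] MvPolynomial ι R :=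
  Finsupp.linearCombination R X ∘ₗ b.repr.toLinearMap

theorem Module.Basis.toMvPolynomial_injective : Function.Injective b.toMvPolynomial :=
  fun _ _ h => b.repr.injective (linearIndependent_X ι R h)

@[simp]
theorem Module.Basis.toMvPolynomial_self (i : ι) : b.toMvPolynomial (b i) = X i := by
  simp [Module.Basis.toMvPolynomial]

theorem Module.Basis.constantCoeff_toMvPolynomial (v : M) :
    constantCoeff (b.toMvPolynomial v) = 0 := by
  simp [Module.Basis.toMvPolynomial, Finsupp.linearCombination_apply, Finsupp.sum]

theorem Module.Basis.C_add_toMvPolynomial_injective :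
    Function.Injective fun p : R × M => C p.1 + b.toMvPolynomial p.2 := by
  rintro ⟨c, v⟩ ⟨d, w⟩ h
  have hcd : c = d := by simpa [constantCoeff_toMvPolynomial] using congrArg constantCoeff h
  subst hcd
  exact Prod.ext rfl (b.toMvPolynomial_injective (add_left_cancel h))

variable (B : M →ₗ[R] M →ₗ[R] R)

noncomputable def annihilation : M →ₗ[R] Derivation R (MvPolynomial ι R) (MvPolynomial ι R) where
  toFun v := mkDerivation R fun i => C (B v (b i))
  map_add' v w := derivation_ext fun i => by simp
  map_smul' r v := derivation_ext fun i => by simp [smul_eq_C_mul]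

theorem annihilation_toMvPolynomial (v w : M) :
    annihilation b B v (b.toMvPolynomial w) = C (B v w) := by
  have h : (annihilation b B v).toLinearMap ∘ₗ b.toMvPolynomial
      = Algebra.linearMap R _ ∘ₗ B v :=
    b.ext fun i => by simp [annihilation]
  exact LinearMap.congr_fun h w

theorem annihilation_commutator (v w : M) : ⁅annihilation b B v, annihilation b B w⁆ = 0 :=
  derivation_ext fun i => by
    simp [annihilation, Derivation.commutator_apply, mkDerivation_X]

noncomputable def fieldOperator : M →ₗ[R] Module.End R (MvPolynomial ι R) where
  toFun v := LinearMap.mulLeft R (b.toMvPolynomial v) + (annihilation b B v : _ →ₗ[R] _)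
  map_add' v w := LinearMap.ext fun q => by simp; ring
  map_smul' r v := LinearMap.ext fun q => by simp

theorem fieldOperator_apply (v : M) :
    fieldOperator b B v
      = LinearMap.mulLeft R (b.toMvPolynomial v) + (annihilation b B v : _ →ₗ[R] _) :=
  rfl

theorem fieldOperator_commutator (v w : M) :
    fieldOperator b B v * fieldOperator b B w - fieldOperator b B w * fieldOperator b B v
      = algebraMap R _ (B v w - B w v) := by
  rw [fieldOperator_apply, fieldOperator_apply,
    mulLeft_add_derivation_commutator _ _ _ _ (annihilation_commutator b B v w),
    annihilation_toMvPolynomial, annihilation_toMvPolynomial]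
  exact LinearMap.ext fun q => by simp [smul_eq_C_mul, sub_mul]

theorem fieldOperator_apply_one (v : M) : fieldOperator b B v 1 = b.toMvPolynomial v := by
  simp [fieldOperator_apply]

end FockRepresentation

section CCRAlgebra

variable (G : V →ₗ[ℂ] V →ₗ[ℂ] ℂ) {A : Type*} [Ring A] [Algebra ℂ A] (f : V →ₗ[ℂ] A)

theorem TensorAlgebra.lift_eq_of_ccrRel
    (hf : ∀ v w, f v * f w - f w * f v = algebraMap ℂ A (G v w)) ⦃x y : TensorAlgebra ℂ V⦄
    (h : ccrRel G x y) :
    TensorAlgebra.lift ℂ f x = TensorAlgebra.lift ℂ f y := by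
  obtain ⟨v, w, hvw⟩ := h
  rw [← sub_eq_zero, ← map_sub, hvw]
  simp [hf]

noncomputable def ccrLift (hf : ∀ v w, f v * f w - f w * f v = algebraMap ℂ A (G v w)) :
    RingQuot (ccrRel G) →ₐ[ℂ] A :=
  RingQuot.liftAlgHom ℂ ⟨TensorAlgebra.lift ℂ f, TensorAlgebra.lift_eq_of_ccrRel G f hf⟩

theorem ccrLift_mkAlgHom_ι (hf : ∀ v w, f v * f w - f w * f v = algebraMap ℂ A (G v w))
    (v : V) :
    ccrLift G f hf (RingQuot.mkAlgHom ℂ (ccrRel G) (TensorAlgebra.ι ℂ v)) = f v := by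
  simp [ccrLift]

end CCRAlgebra

/-- **Injectivity of the degree-≤1 part in the CCR quotient.**
For an alternating (antisymmetric) bilinear form `G` on a complex vector space `V`, the
linear map `ℂ × V → T(V)/I_G`, `(c, v) ↦ c·1 + [ι v]`, is injective; equivalently, the
CCR ideal `I_G` intersects the subspace `ℂ·1 + ι(V)` of `T(V)` only in `0`. -/
theorem ccr_quotient_degree_one_injective (G : V →ₗ[ℂ] V →ₗ[ℂ] ℂ)
    (hG : ∀ v : V, G v v = 0) :
    Function.Injective (fun p : ℂ × V =>
      algebraMap ℂ (RingQuot (ccrRel G)) p.1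
        + RingQuot.mkAlgHom ℂ (ccrRel G) (TensorAlgebra.ι ℂ p.2)) := by
  let b := Module.Basis.ofVectorSpace ℂ V
  let ρ := fieldOperator b ((1 / 2 : ℂ) • G)
  have hρ : ∀ v w, ρ v * ρ w - ρ w * ρ v = algebraMap ℂ _ (G v w) := by
    intro v w
    rw [fieldOperator_commutator]
    congr 1
    simp only [LinearMap.smul_apply, smul_eq_mul, ← LinearMap.IsAlt.neg hG v w]
    ring
  have h_one : ∀ p : ℂ × V, ccrLift G ρ hρ (algebraMap ℂ _ p.1
      + RingQuot.mkAlgHom ℂ (ccrRel G) (TensorAlgebra.ι ℂ p.2)) 1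
        = C p.1 + b.toMvPolynomial p.2 := by
    intro p
    simp [ρ, ccrLift_mkAlgHom_ι, fieldOperator_apply_one, smul_eq_C_mul]
  intro p q hpq
  apply b.C_add_toMvPolynomial_injective
  simpa only [h_one] using congrArg (fun z => ccrLift G ρ hρ z 1) hpq
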